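/- arXiv:2005.00404 — 2 statements merged into one kernel-verified Lean document; each statement's English description precedes it below -/
import Mathlib

section
/- In the grammar construction, let Φ be a nonempty list of product-free formulas such that: no formula of Φ has top p_i, q_i, or r_i for any 0 ≤ i ≤ ν; every formula of Φ whose top is z is of the form z/Γ, that is, z/Y_m/⋯/Y₁ for some m ≥ 0 and formulas Y₁,…,Y_m; and the leftmost formula of Φ does not have top z. Then for all indices i', k ∈ {0,…,ν} and any optional indices k', ℓ' ∈ {0,…,ν}, the sequent H_{k'}^?, H_{ℓ'}^?, S_{p_{i'},q_{i'},r_{i'}}, Φ → H_k (optional formulas omitted when absent) is not derivable in L^Λ(\,/). -/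
/-- Product-free Lambek formulas: variables `p n`, left division `A \\ B`
(written `ldiv A B`) and right division `B / A` (written `rdiv B A`). -/
inductive PF : Type
  | var : ℕ → PF
  | ldiv : PF → PF → PF   -- ldiv A B  is  A \\ B
  | rdiv : PF → PF → PF   -- rdiv B A  is  B / A
  deriving DecidableEq

/-- Derivability in L^Λ(\\,/), the product-free Lambek calculus allowing empty
antecedents: the least set of sequents (`PDer Γ B` means `Γ → B` is derivable)
containing the identity axioms and closed under the four division rules. -/
inductive PDer : List PF → PF → Prop
  /-- identity axiom A → A -/
  | id (A : PF) : PDer [A] A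
  /-- (\\→): from Π → A and Γ,B,Δ → C infer Γ,Π,A\\B,Δ → C -/
  | ldiv_left (P Γ Δ : List PF) (A B C : PF) :
      PDer P A → PDer (Γ ++ [B] ++ Δ) C →
      PDer (Γ ++ P ++ [PF.ldiv A B] ++ Δ) C
  /-- (→\\): from A,Π → B infer Π → A\\B -/
  | ldiv_right (P : List PF) (A B : PF) :
      PDer (A :: P) B → PDer P (PF.ldiv A B)
  /-- (/→): from Π → A and Γ,B,Δ → C infer Γ,B/A,Π,Δ → C -/
  | rdiv_left (P Γ Δ : List PF) (A B C : PF) :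
      PDer P A → PDer (Γ ++ [B] ++ Δ) C →
      PDer (Γ ++ [PF.rdiv B A] ++ P ++ Δ) C
  /-- (→/): from Π,A → B infer Π → B/A -/
  | rdiv_right (P : List PF) (A B : PF) :
      PDer (P ++ [A]) B → PDer P (PF.rdiv B A)

/-- The top variable of a product-free formula: top(p) = p, top(A\\B) = top(B),
top(B/A) = top(B). -/
def PF.top : PF → ℕ
  | PF.var n => n
  | PF.ldiv _ B => B.top
  | PF.rdiv B _ => B.top

/-- The sentinel formula S_{p,q,r} = (r/(p\\r))/(q/(p\\q)). -/
def sentinel (p q r : ℕ) : PF :=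
  PF.rdiv (PF.rdiv (PF.var r) (PF.ldiv (PF.var p) (PF.var r)))
    (PF.rdiv (PF.var q) (PF.ldiv (PF.var p) (PF.var q)))

/-- The sentinel S_{p_i,q_i,r_i} associated with the nonterminal index i. -/
def SentN {ν : ℕ} (pv qv rv : Fin (ν + 1) → ℕ) (i : Fin (ν + 1)) : PF :=
  sentinel (pv i) (qv i) (rv i)

/-- Curried right divisions: `curryR q [Y₁,…,Y_m]` is the formula q/Y_m/⋯/Y₁. -/
def curryR (q : PF) (Δ : List PF) : PF := Δ.foldr (fun Y acc => PF.rdiv acc Y) q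

/-- The formula H_i = (z/z)/S_{p_i,q_i,r_i}. -/
def Hformula {ν : ℕ} (z : ℕ) (pv qv rv : Fin (ν + 1) → ℕ) (i : Fin (ν + 1)) : PF :=
  PF.rdiv (PF.rdiv (PF.var z) (PF.var z)) (SentN pv qv rv i)

/-!
Relational models are sound for L^Λ(\,/): a formula denotes a binary relation on a set, a
sequent holds when the composite of its antecedent (the identity if it is empty) is contained in
its succedent. On `Bool`, let the `p_i` denote the empty relation, `z`, `q_i`, `r_i` the relation
`x = false`, and every other variable the full relation. Then every sentinel, `z/z` and every
`H_i` denote `≤`, every formula of `Φ` relates `false` to `false`, and its leftmost one, whose top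
is some other variable, relates `true` to `false`. So the antecedent relates `true` to `false`,
while `H_k` does not.
-/

namespace PF

section Semantics

variable {U : Type*} (v : ℕ → U → U → Prop)

def interp : PF → U → U → Prop
  | var n => v n
  | ldiv A B => fun y w => ∀ x, A.interp x y → B.interp x w
  | rdiv B A => fun x y => ∀ w, A.interp y w → B.interp x w

def ctxInterp : List PF → U → U → Prop
  | [] => Eq
  | A :: Γ => Relation.Comp (A.interp v) (ctxInterp Γ)

variable {v}

theorem ctxInterp_append (Γ Δ : List PF) :
    ctxInterp v (Γ ++ Δ) = Relation.Comp (ctxInterp v Γ) (ctxInterp v Δ) := by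
  induction Γ with
  | nil => exact Relation.eq_comp.symm
  | cons A Γ ih => simp only [List.cons_append, ctxInterp, ih, Relation.comp_assoc]

@[simp]
theorem ctxInterp_singleton (A : PF) : ctxInterp v [A] = A.interp v :=
  Relation.comp_eq

theorem ctxInterp_refl {Γ : List PF} {x : U} (h : ∀ A ∈ Γ, A.interp v x x) :
    ctxInterp v Γ x x := by
  induction Γ with
  | nil => rfl
  | cons A Γ ih =>
    exact ⟨x, h A List.mem_cons_self, ih fun B hB => h B (List.mem_cons_of_mem A hB)⟩

theorem interp_of_top {A : PF} (h : ∀ x y, v A.top x y) : ∀ x y, A.interp v x y := by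
  induction A with
  | var n => exact h
  | ldiv A B _ ihB => exact fun _ _ _ _ => ihB h _ _
  | rdiv B A ihB _ => exact fun _ _ _ _ => ihB h _ _

theorem curryR_interp_of_row {n : ℕ} {x : U} (h : ∀ y, v n x y) (Ys : List PF) :
    ∀ y, (curryR (var n) Ys).interp v x y := by
  induction Ys with
  | nil => exact h
  | cons Y Ys ih => exact fun _ w _ => ih w

theorem interp_rdiv_iff_le_of_iff_le [Preorder U] {A B : PF}
    (hA : ∀ x y, A.interp v x y ↔ x ≤ y) (hB : ∀ x y, B.interp v x y ↔ x ≤ y) (x y : U) :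
    (rdiv B A).interp v x y ↔ x ≤ y := by
  simp only [interp, hA, hB]
  exact ⟨fun h => h y le_rfl, fun hxy _ hyw => hxy.trans hyw⟩

end Semantics

end PF

open PF

theorem PDer.sound {U : Type*} {v : ℕ → U → U → Prop} {Γ : List PF} {C : PF}
    (h : PDer Γ C) {x y : U} (hxy : ctxInterp v Γ x y) : C.interp v x y := by
  induction h generalizing x y with
  | id A => simpa using hxy
  | ldiv_left P Γ Δ A B C _ _ ih₁ ih₂ =>
    simp only [ctxInterp_append, ctxInterp_singleton] at hxy ih₂
    obtain ⟨c, ⟨b, ⟨a, hΓ, hP⟩, hAB⟩, hΔ⟩ := hxy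
    exact ih₂ ⟨c, ⟨a, hΓ, hAB a (ih₁ hP)⟩, hΔ⟩
  | ldiv_right P A B _ ih => exact fun a ha => ih ⟨x, ha, hxy⟩
  | rdiv_left P Γ Δ A B C _ _ ih₁ ih₂ =>
    simp only [ctxInterp_append, ctxInterp_singleton] at hxy ih₂
    obtain ⟨c, ⟨b, ⟨a, hΓ, hBA⟩, hP⟩, hΔ⟩ := hxy
    exact ih₂ ⟨c, ⟨a, hΓ, hBA c (ih₁ hP)⟩, hΔ⟩
  | rdiv_right P A B _ ih =>
    exact fun w hw => ih (by rw [ctxInterp_append]; exact ⟨y, hxy, by simpa using hw⟩)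

section BoolModel

variable {P Z : Set ℕ}

def boolVal (P Z : Set ℕ) (n : ℕ) (x _ : Bool) : Prop := n ∉ P ∧ (n ∈ Z → x = false)

theorem boolVal_iff {n : ℕ} (hZ : n ∈ Z) (hP : n ∉ P) {x y : Bool} :
    boolVal P Z n x y ↔ x = false := by
  simp [boolVal, hZ, hP]

theorem interp_of_top_notMem {A : PF} (hZ : A.top ∉ Z) (hP : A.top ∉ P) (x y : Bool) :
    A.interp (boolVal P Z) x y :=
  interp_of_top (fun _ _ => ⟨hP, fun h => absurd h hZ⟩) x y

theorem interp_rdiv_iff_le_of_iff_eq_false {A B : PF}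
    (hA : ∀ x y, A.interp (boolVal P Z) x y ↔ x = false)
    (hB : ∀ x y, B.interp (boolVal P Z) x y ↔ x = false) (x y : Bool) :
    (rdiv B A).interp (boolVal P Z) x y ↔ x ≤ y := by
  simp only [interp, hA, hB]
  cases x <;> cases y <;> simp

theorem interp_rdiv_ldiv_iff {p r : ℕ} (hp : p ∈ P) (hZ : r ∈ Z) (hP : r ∉ P) (x y : Bool) :
    (rdiv (var r) (ldiv (var p) (var r))).interp (boolVal P Z) x y ↔ x = false := by
  have hpr : ∀ y w, (ldiv (var p) (var r)).interp (boolVal P Z) y w :=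
    fun _ _ _ h => absurd hp h.1
  change (∀ w, _ → boolVal P Z r x w) ↔ _
  simp only [hpr, boolVal_iff hZ hP, forall_const]

theorem sentinel_interp_iff {p q r : ℕ} (hp : p ∈ P) (hqZ : q ∈ Z) (hqP : q ∉ P) (hrZ : r ∈ Z)
    (hrP : r ∉ P) (x y : Bool) :
    (sentinel p q r).interp (boolVal P Z) x y ↔ x ≤ y :=
  interp_rdiv_iff_le_of_iff_eq_false (interp_rdiv_ldiv_iff hp hqZ hqP)
    (interp_rdiv_ldiv_iff hp hrZ hrP) x y

end BoolModel

section SentinelModel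

variable {ν z : ℕ} {pv qv rv : Fin (ν + 1) → ℕ}

def sentinelVal (z : ℕ) (pv qv rv : Fin (ν + 1) → ℕ) : ℕ → Bool → Bool → Prop :=
  boolVal (Set.range pv) (insert z (Set.range qv ∪ Set.range rv))

theorem disjoint_of_nodup
    (hvars : (([z] : List ℕ) ++ List.ofFn pv ++ List.ofFn qv ++ List.ofFn rv).Nodup) :
    Disjoint (insert z (Set.range qv ∪ Set.range rv)) (Set.range pv) := by
  simp only [List.nodup_append, List.mem_append, List.mem_ofFn, List.mem_singleton] at hvars
  obtain ⟨⟨⟨-, -, hzp⟩, -, hpq⟩, -, hpr⟩ := hvars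
  refine Set.disjoint_left.mpr ?_
  rintro n (rfl | ⟨i, rfl⟩ | ⟨i, rfl⟩) ⟨j, hj⟩
  · exact hzp _ rfl _ ⟨j, hj⟩ rfl
  · exact hpq _ (Or.inr ⟨j, rfl⟩) _ ⟨i, rfl⟩ hj
  · exact hpr _ (Or.inl (Or.inr ⟨j, rfl⟩)) _ ⟨i, rfl⟩ hj

theorem sentinelVal_z_iff
    (hdisj : Disjoint (insert z (Set.range qv ∪ Set.range rv)) (Set.range pv)) {x y : Bool} :
    sentinelVal z pv qv rv z x y ↔ x = false :=
  boolVal_iff (Set.mem_insert z _) (Set.disjoint_left.mp hdisj (Set.mem_insert z _))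

theorem SentN_interp_iff
    (hdisj : Disjoint (insert z (Set.range qv ∪ Set.range rv)) (Set.range pv))
    (d : Fin (ν + 1)) (x y : Bool) :
    (SentN pv qv rv d).interp (sentinelVal z pv qv rv) x y ↔ x ≤ y := by
  have hq : qv d ∈ insert z (Set.range qv ∪ Set.range rv) := Or.inr (Or.inl ⟨d, rfl⟩)
  have hr : rv d ∈ insert z (Set.range qv ∪ Set.range rv) := Or.inr (Or.inr ⟨d, rfl⟩)
  exact sentinel_interp_iff (Set.mem_range_self d) hq (Set.disjoint_left.mp hdisj hq) hr
    (Set.disjoint_left.mp hdisj hr) x y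

theorem Hformula_interp_iff
    (hdisj : Disjoint (insert z (Set.range qv ∪ Set.range rv)) (Set.range pv))
    (d : Fin (ν + 1)) (x y : Bool) :
    (Hformula z pv qv rv d).interp (sentinelVal z pv qv rv) x y ↔ x ≤ y :=
  interp_rdiv_iff_le_of_iff_le (SentN_interp_iff hdisj d)
    (interp_rdiv_iff_le_of_iff_eq_false (A := var z) (B := var z)
      (fun _ _ => sentinelVal_z_iff hdisj)
      (fun _ _ => sentinelVal_z_iff hdisj)) x y

theorem curryR_interp_false
    (hdisj : Disjoint (insert z (Set.range qv ∪ Set.range rv)) (Set.range pv))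
    (Ys : List PF) (y : Bool) :
    (curryR (var z) Ys).interp (sentinelVal z pv qv rv) false y :=
  curryR_interp_of_row (fun _ => (sentinelVal_z_iff hdisj).mpr rfl) Ys y

theorem interp_sentinelVal_of_top {A : PF} (hz : A.top ≠ z)
    (htop : ∀ i, A.top ≠ pv i ∧ A.top ≠ qv i ∧ A.top ≠ rv i) (x y : Bool) :
    A.interp (sentinelVal z pv qv rv) x y := by
  refine interp_of_top_notMem ?_ ?_ x y
  · rintro (h | ⟨i, hi⟩ | ⟨i, hi⟩)
    exacts [hz h, (htop i).2.1 hi.symm, (htop i).2.2 hi.symm]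
  · rintro ⟨i, hi⟩
    exact (htop i).1 hi.symm

end SentinelModel

/-- Let Φ be a nonempty list of formulas none of which has top p_i, q_i or r_i, in which
every formula with top z has the form z/Y_m/⋯/Y₁, and whose leftmost formula does not
have top z. Then no sequent H_{k'}^?, H_{ℓ'}^?, S_{p_{i'},q_{i'},r_{i'}}, Φ → H_k
(optional formulas omitted when absent) is derivable in L^Λ(\\,/). -/
theorem no_H_from_sentinel_block
    {ν : ℕ} (z : ℕ) (pv qv rv : Fin (ν + 1) → ℕ)
    (hvars : (([z] : List ℕ) ++ List.ofFn pv ++ List.ofFn qv ++ List.ofFn rv).Nodup)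
    (A₀ : PF) (Φ' : List PF)
    (htop : ∀ A ∈ A₀ :: Φ', ∀ i : Fin (ν + 1), A.top ≠ pv i ∧ A.top ≠ qv i ∧ A.top ≠ rv i)
    (hz : ∀ A ∈ A₀ :: Φ', A.top = z → ∃ Ys : List PF, A = curryR (PF.var z) Ys)
    (hhead : A₀.top ≠ z)
    (i' k : Fin (ν + 1)) (k' l' : Option (Fin (ν + 1))) :
    ¬ PDer ((k'.map (Hformula z pv qv rv)).toList ++ (l'.map (Hformula z pv qv rv)).toList ++
        [SentN pv qv rv i'] ++ (A₀ :: Φ'))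
      (Hformula z pv qv rv k) := by
  have hdisj := disjoint_of_nodup hvars
  have hprefix : ∀ A ∈ (k'.map (Hformula z pv qv rv)).toList ++
      (l'.map (Hformula z pv qv rv)).toList ++ [SentN pv qv rv i'],
      A.interp (sentinelVal z pv qv rv) true true := by
    intro A hA
    simp only [List.mem_append, Option.mem_toList, Option.map_eq_some_iff,
      List.mem_singleton] at hA
    rcases hA with (⟨d, -, rfl⟩ | ⟨d, -, rfl⟩) | rfl
    exacts [(Hformula_interp_iff hdisj d _ _).mpr le_rfl,
      (Hformula_interp_iff hdisj d _ _).mpr le_rfl, (SentN_interp_iff hdisj i' _ _).mpr le_rfl]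
  have hhead_rel : A₀.interp (sentinelVal z pv qv rv) true false :=
    interp_sentinelVal_of_top hhead (htop A₀ List.mem_cons_self) true false
  have htail : ∀ A ∈ Φ', A.interp (sentinelVal z pv qv rv) false false := by
    intro A hA
    have hA' := List.mem_cons_of_mem A₀ hA
    by_cases htz : A.top = z
    · obtain ⟨Ys, rfl⟩ := hz A hA' htz
      exact curryR_interp_false hdisj Ys false
    · exact interp_sentinelVal_of_top htz (htop A hA') false false
  intro h
  have hsound := h.sound (x := true) (y := false) <| by
    rw [ctxInterp_append]
    exact ⟨true, ctxInterp_refl hprefix, false, hhead_rel, ctxInterp_refl htail⟩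
  exact absurd ((Hformula_interp_iff hdisj k _ _).mp hsound) (by decide : ¬ true ≤ false)
end

section
/- Completeness for the *-external fragment with respect to relational models: a *-external sequent is derivable in L*ω if and only if it is true in every R-model, i.e., for every type W and every valuation of the variables by binary relations on W. -/
/-- Formulas of the Lambek calculus with iteration L*ω: variables `p n`,
left division `A \ B`, right division `B / A` (written `rdiv B A`),
product `A · B` and Kleene star `A*`. -/
inductive LFormula : Type
  | var : ℕ → LFormula
  | ldiv : LFormula → LFormula → LFormula   -- ldiv A B  is  A \ B
  | rdiv : LFormula → LFormula → LFormula   -- rdiv B A  is  B / A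
  | mul : LFormula → LFormula → LFormula    -- A · B
  | star : LFormula → LFormula              -- A*
  deriving DecidableEq

/-- Derivability in L*ω, as the least set of sequents (`LDer Γ B` means `Γ → B` is
derivable) containing the identity axioms and closed under the rules of the calculus,
including the ω-rule for Kleene star. -/
inductive LDer : List LFormula → LFormula → Prop
  /-- identity axiom A → A -/
  | id (A : LFormula) : LDer [A] A
  /-- (\→): from Π → A and Γ,B,Δ → C infer Γ,Π,A\B,Δ → C -/
  | ldiv_left (P Γ Δ : List LFormula) (A B C : LFormula) :
      LDer P A → LDer (Γ ++ [B] ++ Δ) C →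
      LDer (Γ ++ P ++ [LFormula.ldiv A B] ++ Δ) C
  /-- (→\): from A,Π → B infer Π → A\B -/
  | ldiv_right (P : List LFormula) (A B : LFormula) :
      LDer (A :: P) B → LDer P (LFormula.ldiv A B)
  /-- (/→): from Π → A and Γ,B,Δ → C infer Γ,B/A,Π,Δ → C -/
  | rdiv_left (P Γ Δ : List LFormula) (A B C : LFormula) :
      LDer P A → LDer (Γ ++ [B] ++ Δ) C →
      LDer (Γ ++ [LFormula.rdiv B A] ++ P ++ Δ) C
  /-- (→/): from Π,A → B infer Π → B/A -/
  | rdiv_right (P : List LFormula) (A B : LFormula) :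
      LDer (P ++ [A]) B → LDer P (LFormula.rdiv B A)
  /-- (·→): from Γ,A,B,Δ → C infer Γ,A·B,Δ → C -/
  | mul_left (Γ Δ : List LFormula) (A B C : LFormula) :
      LDer (Γ ++ [A, B] ++ Δ) C → LDer (Γ ++ [LFormula.mul A B] ++ Δ) C
  /-- (→·): from Γ → A and Δ → B infer Γ,Δ → A·B -/
  | mul_right (Γ Δ : List LFormula) (A B : LFormula) :
      LDer Γ A → LDer Δ B → LDer (Γ ++ Δ) (LFormula.mul A B)
  /-- (*→)_ω: from Γ,Aⁿ,Δ → C for every n ≥ 0 infer Γ,A*,Δ → C -/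
  | star_left (Γ Δ : List LFormula) (A C : LFormula) :
      (∀ n : ℕ, LDer (Γ ++ List.replicate n A ++ Δ) C) →
      LDer (Γ ++ [LFormula.star A] ++ Δ) C
  /-- (→*)_n: from Π₁ → A, …, Π_n → A infer Π₁,…,Π_n → A* -/
  | star_right (Ps : List (List LFormula)) (A : LFormula) :
      (∀ P ∈ Ps, LDer P A) → LDer Ps.flatten (LFormula.star A)


/-- A formula is product-free if it is built from variables using only \\ and /. -/
def ProdFree : LFormula → Prop
  | LFormula.var _ => True
  | LFormula.ldiv A B => ProdFree A ∧ ProdFree B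
  | LFormula.rdiv B A => ProdFree B ∧ ProdFree A
  | LFormula.mul _ _ => False
  | LFormula.star _ => False

/-- A formula is *-external if no · or * occurs in it within the scope of \\ or /. -/
inductive StarExt : LFormula → Prop
  | pf {A : LFormula} : ProdFree A → StarExt A
  | mul {A B : LFormula} : StarExt A → StarExt B → StarExt (LFormula.mul A B)
  | star {A : LFormula} : StarExt A → StarExt (LFormula.star A)

/-- Interpretation of L*ω formulas in a relational model: a valuation `w` of the
variables by binary relations on W extends to all formulas, · being relational
composition, * the union of all finite iterates (i.e. the reflexive–transitive
closure) and the divisions the corresponding residuals. -/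
def REval {W : Type} (w : ℕ → W → W → Prop) : LFormula → W → W → Prop
  | LFormula.var n => w n
  | LFormula.ldiv A B => fun y zz => ∀ x, REval w A x y → REval w B x zz
  | LFormula.rdiv B A => fun x y => ∀ zz, REval w A y zz → REval w B x zz
  | LFormula.mul A B => fun x zz => ∃ y, REval w A x y ∧ REval w B y zz
  | LFormula.star A => Relation.ReflTransGen (REval w A)

/-- Composition of a list of relations (the empty list composing to the identity). -/
def RelListComp {W : Type} : List (W → W → Prop) → W → W → Prop
  | [] => Eq
  | R :: Rs => fun x zz => ∃ y, R x y ∧ RelListComp Rs y zz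

/-!
Soundness is an induction on derivations. For completeness, validity passes from a *-external
antecedent to each product-free word obtained by reading `A · B` as `A, B` and `A*` as some
`Aⁿ`, and (·→), (*→)_ω rebuild the sequent from these; so it suffices to derive valid
product-free sequents. Cut on a product-free formula is admissible by the usual induction, the
principal cases going through the invertibility of (→\) and (→/). In the canonical model on the
free group over formulas, `p` relates `g` to `g · Δ` whenever `Δ → p` is derivable; using cut,
every product-free `A` is interpreted by `{(g, g · Δ) | Δ → A derivable}`. For `A \ B` the
residual must be shown to relate `g` only to elements `g · Δ` with `Δ` a positive word: testing
it against the two words `A` and `A, A \ A`, which both derive `A`, and using freeness forces this.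
-/

section ReplaceOne

variable {α : Type*} {D : α} {Φ : List α}

def ReplaceOne (D : α) (Φ S S' : List α) : Prop :=
  ∃ Γ Δ, S = Γ ++ [D] ++ Δ ∧ S' = Γ ++ Φ ++ Δ

theorem ReplaceOne.append_left {S S' : List α} (M : List α) (h : ReplaceOne D Φ S S') :
    ReplaceOne D Φ (M ++ S) (M ++ S') := by
  obtain ⟨Γ, Δ, rfl, rfl⟩ := h
  exact ⟨M ++ Γ, Δ, by simp, by simp⟩

theorem ReplaceOne.append_right {S S' : List α} (M : List α) (h : ReplaceOne D Φ S S') :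
    ReplaceOne D Φ (S ++ M) (S' ++ M) := by
  obtain ⟨Γ, Δ, rfl, rfl⟩ := h
  exact ⟨Γ, Δ ++ M, by simp, by simp⟩

theorem replaceOne_singleton {X : α} {S' : List α} : ReplaceOne D Φ [X] S' ↔ X = D ∧ S' = Φ := by
  constructor
  · rintro ⟨_ | ⟨Y, Γ⟩, Δ, h, rfl⟩ <;> simp_all [eq_comm]
  · rintro ⟨rfl, rfl⟩
    exact ⟨[], [], by simp, by simp⟩

theorem replaceOne_append {L₁ L₂ S' : List α} :
    ReplaceOne D Φ (L₁ ++ L₂) S' ↔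
      (∃ L₁', ReplaceOne D Φ L₁ L₁' ∧ S' = L₁' ++ L₂) ∨
        ∃ L₂', ReplaceOne D Φ L₂ L₂' ∧ S' = L₁ ++ L₂' := by
  constructor
  · rintro ⟨Γ, Δ, h, rfl⟩
    rw [List.append_assoc, List.append_eq_append_iff] at h
    rcases h with ⟨t, rfl, ht⟩ | ⟨t, rfl, ht⟩
    · exact .inr ⟨t ++ Φ ++ Δ, ⟨t, Δ, by simp [ht], rfl⟩, by simp⟩
    · rcases t with _ | ⟨X, t⟩
      · exact .inr ⟨Φ ++ Δ, ⟨[], Δ, by simpa using ht.symm, rfl⟩, by simp⟩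
      · obtain ⟨rfl, rfl⟩ : D = X ∧ Δ = t ++ L₂ := by simpa using ht
        exact .inl ⟨Γ ++ Φ ++ t, ⟨Γ, t, by simp, rfl⟩, by simp⟩
  · rintro (⟨L₁', h, rfl⟩ | ⟨L₂', h, rfl⟩)
    exacts [h.append_right L₂, h.append_left L₁]

theorem ReplaceOne.of_flatten {Ps : List (List α)} {S' : List α}
    (h : ReplaceOne D Φ Ps.flatten S') :
    ∃ Ps₁ P P' Ps₂, Ps = Ps₁ ++ P :: Ps₂ ∧ ReplaceOne D Φ P P' ∧
      S' = (Ps₁ ++ P' :: Ps₂).flatten := by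
  induction Ps generalizing S' with
  | nil => obtain ⟨Γ, Δ, h, -⟩ := h; simp at h
  | cons P Ps ih =>
    rcases replaceOne_append.mp h with ⟨P', hP, rfl⟩ | ⟨T, hT, rfl⟩
    · exact ⟨[], P, P', Ps, rfl, hP, by simp⟩
    · obtain ⟨Ps₁, Q, Q', Ps₂, rfl, hQ, rfl⟩ := ih hT
      exact ⟨P :: Ps₁, Q, Q', Ps₂, rfl, hQ, by simp⟩

end ReplaceOne

namespace LDer

theorem ldiv_inv {Φ : List LFormula} {A B : LFormula} (h : LDer Φ (.ldiv A B)) :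
    LDer (A :: Φ) B := by
  generalize hF : LFormula.ldiv A B = F at h
  induction h with
  | id =>
    subst hF
    simpa using ldiv_left [A] [] [] A B B (id A) (by simpa using id B)
  | ldiv_left P Γ Δ A' B' _ dP _ _ ih =>
    simpa using ldiv_left P (A :: Γ) Δ A' B' B dP (by simpa using ih hF)
  | ldiv_right => cases hF; assumption
  | rdiv_left P Γ Δ A' B' _ dP _ _ ih =>
    simpa using rdiv_left P (A :: Γ) Δ A' B' B dP (by simpa using ih hF)
  | mul_left Γ Δ A' B' _ _ ih =>
    simpa using mul_left (A :: Γ) Δ A' B' B (by simpa using ih hF)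
  | star_left Γ Δ A' _ _ ih =>
    simpa using star_left (A :: Γ) Δ A' B fun n => by simpa using ih n hF
  | rdiv_right | mul_right | star_right => cases hF

theorem rdiv_inv {Φ : List LFormula} {A B : LFormula} (h : LDer Φ (.rdiv B A)) :
    LDer (Φ ++ [A]) B := by
  generalize hF : LFormula.rdiv B A = F at h
  induction h with
  | id =>
    subst hF
    simpa using rdiv_left [A] [] [] A B B (id A) (by simpa using id B)
  | ldiv_left P Γ Δ A' B' _ dP _ _ ih =>
    simpa using ldiv_left P Γ (Δ ++ [A]) A' B' B dP (by simpa using ih hF)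
  | rdiv_right => cases hF; assumption
  | rdiv_left P Γ Δ A' B' _ dP _ _ ih =>
    simpa using rdiv_left P Γ (Δ ++ [A]) A' B' B dP (by simpa using ih hF)
  | mul_left Γ Δ A' B' _ _ ih =>
    simpa using mul_left Γ (Δ ++ [A]) A' B' B (by simpa using ih hF)
  | star_left Γ Δ A' _ _ ih =>
    simpa using star_left Γ (Δ ++ [A]) A' B fun n => by simpa using ih n hF
  | ldiv_right | mul_right | star_right => cases hF

end LDer

def CutAdmissible (D : LFormula) : Prop :=
  ∀ ⦃Φ Γ Δ : List LFormula⦄ ⦃C : LFormula⦄,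
    LDer Φ D → LDer (Γ ++ [D] ++ Δ) C → LDer (Γ ++ Φ ++ Δ) C

theorem CutAdmissible.ldiv_principal {A B C : LFormula} {Φ P Γ Δ : List LFormula}
    (hA : CutAdmissible A) (hB : CutAdmissible B) (hΦ : LDer Φ (.ldiv A B)) (hP : LDer P A)
    (hC : LDer (Γ ++ [B] ++ Δ) C) : LDer (Γ ++ P ++ Φ ++ Δ) C := by
  have hPΦ : LDer (P ++ Φ) B := by simpa using hA (Γ := []) hP hΦ.ldiv_inv
  simpa using hB hPΦ hC

theorem CutAdmissible.rdiv_principal {A B C : LFormula} {Φ P Γ Δ : List LFormula}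
    (hA : CutAdmissible A) (hB : CutAdmissible B) (hΦ : LDer Φ (.rdiv B A)) (hP : LDer P A)
    (hC : LDer (Γ ++ [B] ++ Δ) C) : LDer (Γ ++ Φ ++ P ++ Δ) C := by
  have hΦP : LDer (Φ ++ P) B := by simpa using hA (Δ := []) hP (by simpa using hΦ.rdiv_inv)
  simpa using hB hΦP hC

theorem LDer.cut_of_replaceOne {D : LFormula} {Φ : List LFormula} (hD : ProdFree D)
    (hΦ : LDer Φ D)
    (hsub : ∀ A B, (D = .ldiv A B ∨ D = .rdiv B A) → CutAdmissible A ∧ CutAdmissible B)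
    {S : List LFormula} {C : LFormula} (h : LDer S C) {S' : List LFormula}
    (hS : ReplaceOne D Φ S S') : LDer S' C := by
  induction h generalizing S' with
  | id =>
    obtain ⟨rfl, rfl⟩ := replaceOne_singleton.mp hS
    exact hΦ
  | ldiv_left P Γ Δ A B C dP dB ihP ihB =>
    simp only [replaceOne_append, replaceOne_singleton] at hS
    rcases hS with ⟨_, ⟨_, ⟨Γ', hΓ, rfl⟩ | ⟨P', hP, rfl⟩, rfl⟩ | ⟨_, ⟨rfl, rfl⟩, rfl⟩, rfl⟩ |
      ⟨Δ', hΔ, rfl⟩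
    · simpa using ldiv_left P Γ' Δ A B C dP (ihB ((hΓ.append_right _).append_right _))
    · simpa using ldiv_left P' Γ Δ A B C (ihP hP) dB
    · obtain ⟨hA, hB⟩ := hsub A B (.inl rfl)
      exact hA.ldiv_principal hB hΦ dP dB
    · simpa using ldiv_left P Γ Δ' A B C dP (ihB (hΔ.append_left _))
  | ldiv_right _ A B _ ih =>
    exact ldiv_right _ A B (ih (hS.append_left [A]))
  | rdiv_left P Γ Δ A B C dP dB ihP ihB =>
    simp only [replaceOne_append, replaceOne_singleton] at hS
    rcases hS with ⟨_, ⟨_, ⟨Γ', hΓ, rfl⟩ | ⟨_, ⟨rfl, rfl⟩, rfl⟩, rfl⟩ | ⟨P', hP, rfl⟩, rfl⟩ |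
      ⟨Δ', hΔ, rfl⟩
    · simpa using rdiv_left P Γ' Δ A B C dP (ihB ((hΓ.append_right _).append_right _))
    · obtain ⟨hA, hB⟩ := hsub A B (.inr rfl)
      exact hA.rdiv_principal hB hΦ dP dB
    · simpa using rdiv_left P' Γ Δ A B C (ihP hP) dB
    · simpa using rdiv_left P Γ Δ' A B C dP (ihB (hΔ.append_left _))
  | rdiv_right _ A B _ ih =>
    exact rdiv_right _ A B (ih (hS.append_right [A]))
  | mul_left Γ Δ A B C _ ih =>
    simp only [replaceOne_append, replaceOne_singleton] at hS
    rcases hS with ⟨_, ⟨Γ', hΓ, rfl⟩ | ⟨_, ⟨rfl, rfl⟩, rfl⟩, rfl⟩ | ⟨Δ', hΔ, rfl⟩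
    · simpa using mul_left Γ' Δ A B C (ih ((hΓ.append_right _).append_right _))
    · exact hD.elim
    · simpa using mul_left Γ Δ' A B C (ih (hΔ.append_left _))
  | mul_right Γ Δ A B _ _ ihΓ ihΔ =>
    rcases replaceOne_append.mp hS with ⟨Γ', hΓ, rfl⟩ | ⟨Δ', hΔ, rfl⟩
    · exact mul_right Γ' Δ A B (ihΓ hΓ) ‹_›
    · exact mul_right Γ Δ' A B ‹_› (ihΔ hΔ)
  | star_left Γ Δ A C _ ih =>
    simp only [replaceOne_append, replaceOne_singleton] at hS
    rcases hS with ⟨_, ⟨Γ', hΓ, rfl⟩ | ⟨_, ⟨rfl, rfl⟩, rfl⟩, rfl⟩ | ⟨Δ', hΔ, rfl⟩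
    · exact star_left Γ' Δ A C fun n => ih n ((hΓ.append_right _).append_right _)
    · exact hD.elim
    · simpa using star_left Γ Δ' A C fun n => by simpa using ih n (hΔ.append_left _)
  | star_right Ps A hPs ih =>
    obtain ⟨Ps₁, P, P', Ps₂, rfl, hP, rfl⟩ := hS.of_flatten
    refine star_right _ A fun Q hQ => ?_
    rw [List.mem_append, List.mem_cons] at hQ
    rcases hQ with hQ | rfl | hQ
    · exact hPs Q (by simp [hQ])
    · exact ih P (by simp) hP
    · exact hPs Q (by simp [hQ])

theorem cutAdmissible_of_prodFree {D : LFormula} (hD : ProdFree D) : CutAdmissible D := by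
  intro Φ Γ Δ C hΦ h
  refine LDer.cut_of_replaceOne hD hΦ ?_ h ⟨Γ, Δ, rfl, rfl⟩
  rintro A B (rfl | rfl)
  · exact ⟨cutAdmissible_of_prodFree hD.1, cutAdmissible_of_prodFree hD.2⟩
  · exact ⟨cutAdmissible_of_prodFree hD.2, cutAdmissible_of_prodFree hD.1⟩

section RelListComp

variable {W : Type}

@[simp]
theorem relListComp_nil {x z : W} : RelListComp [] x z ↔ x = z := Iff.rfl

@[simp]
theorem relListComp_cons {R : W → W → Prop} {Rs : List (W → W → Prop)} {x z : W} :
    RelListComp (R :: Rs) x z ↔ ∃ y, R x y ∧ RelListComp Rs y z := Iff.rfl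

theorem relListComp_singleton {R : W → W → Prop} {x z : W} : RelListComp [R] x z ↔ R x z := by
  simp

theorem relListComp_append {Rs Ss : List (W → W → Prop)} {x z : W} :
    RelListComp (Rs ++ Ss) x z ↔ ∃ y, RelListComp Rs x y ∧ RelListComp Ss y z := by
  induction Rs generalizing x with
  | nil => simp
  | cons R Rs ih =>
    simp only [List.cons_append, relListComp_cons, ih]
    exact ⟨fun ⟨y, hy, u, hu, hz⟩ => ⟨u, ⟨y, hy, hu⟩, hz⟩,
      fun ⟨u, ⟨y, hy, hu⟩, hz⟩ => ⟨y, hy, u, hu, hz⟩⟩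

theorem relListComp_append_append {Rs Ms Ss : List (W → W → Prop)} {x z : W} :
    RelListComp (Rs ++ Ms ++ Ss) x z ↔
      ∃ y y', RelListComp Rs x y ∧ RelListComp Ms y y' ∧ RelListComp Ss y' z := by
  simp only [relListComp_append]
  exact ⟨fun ⟨y', ⟨y, hx, hy⟩, hz⟩ => ⟨y, y', hx, hy, hz⟩,
    fun ⟨y, y', hx, hy, hz⟩ => ⟨y', ⟨y, hx, hy⟩, hz⟩⟩

theorem exists_relListComp_replicate_iff {R : W → W → Prop} {x z : W} :
    (∃ n, RelListComp (List.replicate n R) x z) ↔ Relation.ReflTransGen R x z := by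
  constructor
  · rintro ⟨n, h⟩
    induction n generalizing x with
    | zero => obtain rfl := h; exact .refl
    | succ n ih =>
      obtain ⟨y, hxy, hyz⟩ := h
      exact .head hxy (ih hyz)
  · intro h
    induction h using Relation.ReflTransGen.head_induction_on with
    | refl => exact ⟨0, rfl⟩
    | head hxy _ ih =>
      obtain ⟨n, hn⟩ := ih
      exact ⟨n + 1, _, hxy, hn⟩

theorem reflTransGen_of_relListComp_flatten {R : W → W → Prop} {Rss : List (List (W → W → Prop))}
    (h : ∀ Rs ∈ Rss, ∀ x z, RelListComp Rs x z → R x z) {x z : W}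
    (hxz : RelListComp Rss.flatten x z) : Relation.ReflTransGen R x z := by
  induction Rss generalizing x with
  | nil => obtain rfl : x = z := hxz; exact .refl
  | cons Rs Rss ih =>
    obtain ⟨y, hxy, hyz⟩ := relListComp_append.mp hxz
    exact .head (h Rs (by simp) x y hxy) (ih (fun Ss hSs => h Ss (by simp [hSs])) hyz)

end RelListComp

def RValid (Γ : List LFormula) (B : LFormula) : Prop :=
  ∀ (W : Type) (w : ℕ → W → W → Prop) (x z : W),
    RelListComp (Γ.map (REval w)) x z → REval w B x z

theorem RValid.of_middle {Γ M M' Δ : List LFormula} {C : LFormula}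
    (hM : ∀ (W : Type) (w : ℕ → W → W → Prop) (x z : W),
      RelListComp (M'.map (REval w)) x z → RelListComp (M.map (REval w)) x z)
    (h : RValid (Γ ++ M ++ Δ) C) : RValid (Γ ++ M' ++ Δ) C := by
  intro W w x z hx
  simp only [List.map_append, relListComp_append_append] at hx
  obtain ⟨y, y', hΓ, hM', hΔ⟩ := hx
  exact h W w x z (by
    simp only [List.map_append, relListComp_append_append]
    exact ⟨y, y', hΓ, hM W w y y' hM', hΔ⟩)

theorem LDer.rValid {Γ : List LFormula} {B : LFormula} (h : LDer Γ B) : RValid Γ B := by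
  induction h with
  | id => intro W w x z; simp
  | ldiv_left P Γ _ _ _ _ _ _ ihP ihB =>
    rw [List.append_assoc Γ P]
    refine ihB.of_middle fun W w x z hx => ?_
    simp only [List.map_append, relListComp_append, List.map_cons, List.map_nil,
      relListComp_singleton] at hx ⊢
    obtain ⟨y, hP, hdiv⟩ := hx
    exact hdiv x (ihP W w x y hP)
  | ldiv_right _ _ _ _ ih =>
    exact fun W w y z hP x hA => ih W w x z ⟨y, hA, hP⟩
  | rdiv_left _ Γ _ _ _ _ _ _ ihP ihB =>
    rw [List.append_assoc Γ]
    refine ihB.of_middle fun W w x z hx => ?_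
    simp only [List.map_append, relListComp_append, List.map_cons, List.map_nil,
      relListComp_singleton] at hx ⊢
    obtain ⟨y, hdiv, hP⟩ := hx
    exact hdiv z (ihP W w y z hP)
  | rdiv_right _ _ _ _ ih =>
    refine fun W w x y hP z hA => ih W w x z ?_
    simp only [List.map_append, relListComp_append]
    exact ⟨y, hP, by simpa using hA⟩
  | mul_left _ _ _ _ _ _ ih =>
    refine ih.of_middle fun W w x z hx => ?_
    simpa [REval] using hx
  | mul_right _ _ _ _ _ _ ihΓ ihΔ =>
    intro W w x z hx
    obtain ⟨y, hΓ, hΔ⟩ := relListComp_append.mp (by simpa using hx)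
    exact ⟨y, ihΓ W w x y hΓ, ihΔ W w y z hΔ⟩
  | star_left _ _ A _ _ ih =>
    intro W w x z hx
    simp only [List.map_append, relListComp_append_append, List.map_cons, List.map_nil,
      relListComp_singleton] at hx
    obtain ⟨y, y', hΓ, hA, hΔ⟩ := hx
    obtain ⟨n, hn⟩ := exists_relListComp_replicate_iff.mpr hA
    refine ih n W w x z ?_
    simp only [List.map_append, relListComp_append_append, List.map_replicate]
    exact ⟨y, y', hΓ, hn, hΔ⟩
  | star_right Ps _ _ ih =>
    intro W w x z hx
    refine reflTransGen_of_relListComp_flatten (Rss := Ps.map (List.map (REval w)))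
      ?_ (by simpa [List.map_flatten] using hx)
    simpa using fun P hP => ih P hP W w

open FreeGroup (of toWord toWord_mk)

def toFreeGroup (Γ : List LFormula) : FreeGroup LFormula :=
  FreeGroup.mk (Γ.map fun A => (A, true))

theorem toFreeGroup_nil : toFreeGroup [] = 1 := rfl

theorem toFreeGroup_append (Γ Δ : List LFormula) :
    toFreeGroup (Γ ++ Δ) = toFreeGroup Γ * toFreeGroup Δ := by
  simp [toFreeGroup, FreeGroup.mul_mk]

theorem toFreeGroup_cons (A : LFormula) (Γ : List LFormula) :
    toFreeGroup (A :: Γ) = of A * toFreeGroup Γ :=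
  toFreeGroup_append [A] Γ

theorem toFreeGroup_singleton (A : LFormula) : toFreeGroup [A] = of A := rfl

theorem isReduced_map_true (Γ : List LFormula) :
    FreeGroup.IsReduced (Γ.map fun A => (A, true)) := by
  simpa [FreeGroup.IsReduced, List.isChain_map] using
    List.isChain_iff_getElem.mpr fun _ _ => trivial

theorem toWord_toFreeGroup (Γ : List LFormula) :
    (toFreeGroup Γ).toWord = Γ.map fun A => (A, true) := by
  rw [toFreeGroup, toWord_mk, (isReduced_map_true Γ).reduce_eq]

theorem toFreeGroup_injective : Function.Injective toFreeGroup := fun Γ Δ h => by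
  simpa [toWord_toFreeGroup, Function.comp_def] using congrArg (List.map Prod.fst ∘ toWord) h

theorem toFreeGroup_ne_mk {L : List (LFormula × Bool)} (hL : FreeGroup.IsReduced L) {A : LFormula}
    (hA : (A, false) ∈ L) (Γ : List LFormula) : toFreeGroup Γ ≠ FreeGroup.mk L := by
  intro h
  have hw := congrArg toWord h
  rw [toWord_toFreeGroup, toWord_mk, hL.reduce_eq] at hw
  simp [← hw] at hA

theorem exists_eq_cons_of_of_mul {a b : LFormula} (hab : a ≠ b) {u : FreeGroup LFormula}
    {S₁ S₂ : List LFormula} (h₁ : of a * u = toFreeGroup S₁)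
    (h₂ : of a * (of b * u) = toFreeGroup S₂) : ∃ Γ, S₁ = a :: Γ ∧ u = toFreeGroup Γ := by
  have hu : u = (of a)⁻¹ * toFreeGroup S₁ := eq_inv_mul_of_mul_eq h₁
  by_cases hS : ∃ Γ, S₁ = a :: Γ
  · obtain ⟨Γ, rfl⟩ := hS
    exact ⟨Γ, rfl, by rw [hu, toFreeGroup_cons]; group⟩
  -- otherwise the reduced word of `of a * (of b * u)` is `a b a⁻¹ S₁`, which is not positive
  set L := [(a, true), (b, true), (a, false)] ++ S₁.map fun A => (A, true)
  have hL : FreeGroup.IsReduced L := by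
    rw [FreeGroup.IsReduced, List.isChain_append]
    refine ⟨by simp [hab, Ne.symm hab], isReduced_map_true S₁, ?_⟩
    rcases S₁ with _ | ⟨x, Γ⟩
    · simp
    · simp only [List.getLast?_cons_cons, List.getLast?_singleton, List.map_cons,
        List.head?_cons, Option.mem_def, Option.some.injEq, forall_eq']
      rintro rfl
      exact absurd ⟨Γ, rfl⟩ hS
  have hword : of a * (of b * u) = FreeGroup.mk L := by
    rw [hu, toFreeGroup]
    simp [L, of, FreeGroup.inv_mk, FreeGroup.invRev, FreeGroup.mul_mk]
  exact absurd (h₂.symm.trans hword) (toFreeGroup_ne_mk hL (A := a) (by simp [L]) S₂)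

theorem exists_eq_concat_of_mul_of {a b : LFormula} (hab : a ≠ b) {u : FreeGroup LFormula}
    {S₁ S₂ : List LFormula} (h₁ : u * of a = toFreeGroup S₁)
    (h₂ : u * of b * of a = toFreeGroup S₂) : ∃ Γ, S₁ = Γ ++ [a] ∧ u = toFreeGroup Γ := by
  have hu : u = toFreeGroup S₁ * (of a)⁻¹ := eq_mul_inv_of_mul_eq h₁
  by_cases hS : ∃ Γ, S₁ = Γ ++ [a]
  · obtain ⟨Γ, rfl⟩ := hS
    exact ⟨Γ, rfl, by rw [hu, toFreeGroup_append, toFreeGroup_singleton]; group⟩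
  -- otherwise the reduced word of `u * of b * of a` is `S₁ a⁻¹ b a`, which is not positive
  set L := (S₁.map fun A => (A, true)) ++ [(a, false), (b, true), (a, true)]
  have hL : FreeGroup.IsReduced L := by
    rw [FreeGroup.IsReduced, List.isChain_append]
    refine ⟨isReduced_map_true S₁, by simp [hab, Ne.symm hab], ?_⟩
    rcases S₁.eq_nil_or_concat' with rfl | ⟨Γ, x, rfl⟩
    · simp
    · simp only [List.map_append, List.map_cons, List.map_nil, List.getLast?_concat,
        List.head?_cons, Option.mem_def, Option.some.injEq, forall_eq']
      rintro rfl
      exact absurd ⟨Γ, rfl⟩ hS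
  have hword : u * of b * of a = FreeGroup.mk L := by
    rw [hu, toFreeGroup]
    simp [L, of, FreeGroup.inv_mk, FreeGroup.invRev, FreeGroup.mul_mk]
  exact absurd (h₂.symm.trans hword) (toFreeGroup_ne_mk hL (A := a) (by simp [L]) S₂)

def canonicalRel (A : LFormula) (g h : FreeGroup LFormula) : Prop :=
  ∃ Δ, LDer Δ A ∧ h = g * toFreeGroup Δ

theorem canonicalRel_mul_toFreeGroup {A : LFormula} {Δ : List LFormula} (h : LDer Δ A)
    (g : FreeGroup LFormula) : canonicalRel A g (g * toFreeGroup Δ) :=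
  ⟨Δ, h, rfl⟩

theorem ne_ldiv_self (A : LFormula) : A ≠ .ldiv A A :=
  fun h => by simpa using congrArg sizeOf h

theorem ne_rdiv_self (A : LFormula) : A ≠ .rdiv A A :=
  fun h => by simpa using congrArg sizeOf h

theorem canonicalRel_ldiv_iff {A B : LFormula} (hA : CutAdmissible A)
    {g h : FreeGroup LFormula} :
    (∀ x, canonicalRel A x g → canonicalRel B x h) ↔ canonicalRel (.ldiv A B) g h := by
  constructor
  · intro H
    have hA₁ : canonicalRel A (g * (of A)⁻¹) g := ⟨[A], .id A, by simp [toFreeGroup_singleton]⟩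
    have hA₂ : canonicalRel A (g * (of A * of (.ldiv A A))⁻¹) g :=
      ⟨[A, .ldiv A A], by simpa using LDer.ldiv_left [A] [] [] A A A (.id A) (by simpa using .id A),
        by rw [toFreeGroup_cons, toFreeGroup_singleton]; group⟩
    obtain ⟨S₁, dS₁, hS₁⟩ := H _ hA₁
    obtain ⟨S₂, -, hS₂⟩ := H _ hA₂
    obtain ⟨Γ, rfl, hΓ⟩ := exists_eq_cons_of_of_mul (ne_ldiv_self A) (u := g⁻¹ * h)
      (S₁ := S₁) (S₂ := S₂)
      (by rw [hS₁]; group) (by rw [hS₂]; group)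
    exact ⟨Γ, .ldiv_right Γ A B dS₁, by rw [← hΓ]; group⟩
  · rintro ⟨Δ, dΔ, rfl⟩ x ⟨P, dP, rfl⟩
    exact ⟨P ++ Δ, by simpa using hA (Γ := []) dP dΔ.ldiv_inv,
      by rw [toFreeGroup_append]; group⟩

theorem canonicalRel_rdiv_iff {A B : LFormula} (hA : CutAdmissible A)
    {g h : FreeGroup LFormula} :
    (∀ z, canonicalRel A h z → canonicalRel B g z) ↔ canonicalRel (.rdiv B A) g h := by
  constructor
  · intro H
    obtain ⟨S₁, dS₁, hS₁⟩ := H _ (canonicalRel_mul_toFreeGroup (.id A) h)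
    obtain ⟨S₂, -, hS₂⟩ := H _ (canonicalRel_mul_toFreeGroup
      (by simpa using LDer.rdiv_left [A] [] [] A A A (.id A) (by simpa using .id A)) h)
    obtain ⟨Γ, rfl, hΓ⟩ := exists_eq_concat_of_mul_of (ne_rdiv_self A) (u := g⁻¹ * h)
      (S₁ := S₁) (S₂ := S₂)
      (by rw [← toFreeGroup_singleton, mul_assoc, hS₁]; group)
      (by rw [mul_assoc, mul_assoc, ← toFreeGroup_singleton A, ← toFreeGroup_cons, hS₂]; group)
    exact ⟨Γ, .rdiv_right Γ A B dS₁, by rw [← hΓ]; group⟩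
  · rintro ⟨Δ, dΔ, rfl⟩ z ⟨P, dP, rfl⟩
    exact ⟨Δ ++ P, by simpa using hA (Δ := []) dP (by simpa using dΔ.rdiv_inv),
      by rw [toFreeGroup_append]; group⟩

def canonicalVal (n : ℕ) : FreeGroup LFormula → FreeGroup LFormula → Prop :=
  canonicalRel (.var n)

theorem rEval_canonicalVal {A : LFormula} (hA : ProdFree A) :
    REval canonicalVal A = canonicalRel A := by
  induction A with
  | var n => rfl
  | ldiv A B ihA ihB =>
    ext g h
    simp only [REval, ihA hA.1, ihB hA.2]
    exact canonicalRel_ldiv_iff (cutAdmissible_of_prodFree hA.1)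
  | rdiv B A ihB ihA =>
    ext g h
    simp only [REval, ihA hA.2, ihB hA.1]
    exact canonicalRel_rdiv_iff (cutAdmissible_of_prodFree hA.2)
  | mul | star => exact hA.elim

theorem relListComp_canonicalVal {Γ : List LFormula} (hΓ : ∀ A ∈ Γ, ProdFree A)
    (g : FreeGroup LFormula) :
    RelListComp (Γ.map (REval canonicalVal)) g (g * toFreeGroup Γ) := by
  induction Γ generalizing g with
  | nil => simp [toFreeGroup_nil]
  | cons A Γ ih =>
    refine ⟨g * of A, ?_, ?_⟩
    · rw [rEval_canonicalVal (hΓ A (by simp))]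
      exact canonicalRel_mul_toFreeGroup (.id A) g
    · simpa [toFreeGroup_cons, mul_assoc] using ih (fun B hB => hΓ B (by simp [hB])) (g * of A)

theorem LDer.of_rValid_of_prodFree {Γ : List LFormula} {C : LFormula}
    (hΓ : ∀ A ∈ Γ, ProdFree A) (hC : ProdFree C) (h : RValid Γ C) : LDer Γ C := by
  have hval := h _ canonicalVal 1 _ (relListComp_canonicalVal hΓ 1)
  rw [rEval_canonicalVal hC] at hval
  obtain ⟨Δ, hΔ, hΓΔ⟩ := hval
  obtain rfl : Γ = Δ := toFreeGroup_injective (by simpa using hΓΔ)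
  exact hΔ

inductive Unfolds : LFormula → List LFormula → Prop
  | prodFree {A : LFormula} : ProdFree A → Unfolds A [A]
  | mul {A B : LFormula} {S T : List LFormula} :
      Unfolds A S → Unfolds B T → Unfolds (.mul A B) (S ++ T)
  | star_nil (A : LFormula) : Unfolds (.star A) []
  | star_cons {A : LFormula} {S T : List LFormula} :
      Unfolds A S → Unfolds (.star A) T → Unfolds (.star A) (S ++ T)

namespace Unfolds

theorem prodFree_of_mem {A : LFormula} {S : List LFormula} (h : Unfolds A S) :
    ∀ X ∈ S, ProdFree X := by
  induction h with
  | prodFree hA => simpa using hA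
  | mul _ _ ihS ihT | star_cons _ _ ihS ihT =>
    simpa [or_imp, forall_and] using ⟨ihS, ihT⟩
  | star_nil => simp

theorem relListComp {A : LFormula} {S : List LFormula} (h : Unfolds A S) {W : Type}
    (w : ℕ → W → W → Prop) {x z : W} (hS : RelListComp (S.map (REval w)) x z) :
    REval w A x z := by
  induction h generalizing x z with
  | prodFree => simpa using hS
  | mul _ _ ihS ihT =>
    obtain ⟨y, hxy, hyz⟩ := relListComp_append.mp (by simpa using hS)
    exact ⟨y, ihS hxy, ihT hyz⟩
  | star_nil => obtain rfl : x = z := hS; exact .refl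
  | star_cons _ _ ihS ihT =>
    obtain ⟨y, hxy, hyz⟩ := relListComp_append.mp (by simpa using hS)
    exact .head (ihS hxy) (ihT hyz)

end Unfolds

theorem LDer.replicate_of_unfolds_star {A C : LFormula} {Δ : List LFormula}
    (hA : ∀ Γ' Δ', (∀ S, Unfolds A S → LDer (Γ' ++ S ++ Δ') C) → LDer (Γ' ++ [A] ++ Δ') C)
    (n : ℕ) : ∀ Γ, (∀ T, Unfolds (.star A) T → LDer (Γ ++ T ++ Δ) C) →
      LDer (Γ ++ List.replicate n A ++ Δ) C := by
  induction n with
  | zero => exact fun Γ h => by simpa using h [] (.star_nil A)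
  | succ n ih =>
    intro Γ h
    have hstep := hA Γ (List.replicate n A ++ Δ) fun S hS =>
      by simpa using ih (Γ ++ S) fun T hT => by simpa using h (S ++ T) (.star_cons hS hT)
    simpa [List.replicate_succ] using hstep

theorem LDer.of_unfolds {A C : LFormula} (hA : StarExt A) {Γ Δ : List LFormula}
    (h : ∀ S, Unfolds A S → LDer (Γ ++ S ++ Δ) C) : LDer (Γ ++ [A] ++ Δ) C := by
  induction hA generalizing Γ Δ with
  | pf hA => exact h [_] (.prodFree hA)
  | @mul A B _ _ ihA ihB =>
    refine mul_left Γ Δ A B C ?_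
    have := ihA (Δ := [B] ++ Δ) fun S hS =>
      by simpa using ihB (Γ := Γ ++ S) fun T hT => by simpa using h (S ++ T) (.mul hS hT)
    simpa using this
  | @star A _ ihA =>
    exact star_left Γ Δ A C fun n =>
      replicate_of_unfolds_star (fun _ _ => ihA) n Γ h

theorem LDer.of_forall₂_unfolds {Γ Θ : List LFormula} {C : LFormula}
    (hΓ : ∀ A ∈ Γ, StarExt A)
    (h : ∀ Ss, List.Forall₂ Unfolds Γ Ss → LDer (Θ ++ Ss.flatten) C) : LDer (Θ ++ Γ) C := by
  induction Γ generalizing Θ with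
  | nil => simpa using h [] .nil
  | cons A Γ ih =>
    have := LDer.of_unfolds (hΓ A (by simp)) (Γ := Θ) (Δ := Γ) fun S hS =>
      by simpa using ih (fun B hB => hΓ B (by simp [hB])) (Θ := Θ ++ S) fun Ss hSs =>
        by simpa using h (S :: Ss) (.cons hS hSs)
    simpa using this

theorem prodFree_of_mem_flatten {Γ : List LFormula} {Ss : List (List LFormula)}
    (hSs : List.Forall₂ Unfolds Γ Ss) : ∀ X ∈ Ss.flatten, ProdFree X := by
  induction hSs with
  | nil => simp
  | cons hS _ ih =>
    rw [List.flatten_cons]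
    exact fun X hX => (List.mem_append.mp hX).elim (hS.prodFree_of_mem X) (ih X)

theorem relListComp_of_forall₂_unfolds {Γ : List LFormula} {Ss : List (List LFormula)}
    (hSs : List.Forall₂ Unfolds Γ Ss) {W : Type} (w : ℕ → W → W → Prop) {x z : W}
    (h : RelListComp (Ss.flatten.map (REval w)) x z) : RelListComp (Γ.map (REval w)) x z := by
  induction hSs generalizing x with
  | nil => exact h
  | cons hS _ ih =>
    obtain ⟨y, hxy, hyz⟩ := relListComp_append.mp (by simpa using h)
    exact ⟨y, hS.relListComp w hxy, ih (by simpa using hyz)⟩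

theorem RValid.of_forall₂_unfolds {Γ : List LFormula} {Ss : List (List LFormula)} {C : LFormula}
    (hSs : List.Forall₂ Unfolds Γ Ss) (h : RValid Γ C) : RValid Ss.flatten C :=
  fun W w x z hxz => h W w x z (relListComp_of_forall₂_unfolds hSs w hxz)

/-- Completeness of the *-external fragment of L*ω w.r.t. relational models:
a *-external sequent is derivable in L*ω iff it is true in every R-model, i.e.
w(A₁)∘…∘w(A_n) ⊆ w(B) for every type W and every valuation w of the variables by
binary relations on W (for the empty antecedent: the identity relation is
contained in w(B)). -/
theorem star_external_Rmodel_completeness (Γ : List LFormula) (B : LFormula)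
    (hΓ : ∀ A ∈ Γ, StarExt A) (hB : ProdFree B) :
    LDer Γ B ↔ ∀ (W : Type) (w : ℕ → W → W → Prop) (x zz : W),
      RelListComp (Γ.map (REval w)) x zz → REval w B x zz := by
  refine ⟨LDer.rValid, fun h => ?_⟩
  simpa using LDer.of_forall₂_unfolds hΓ (Θ := []) fun Ss hSs =>
    LDer.of_rValid_of_prodFree (prodFree_of_mem_flatten hSs) hB
      (RValid.of_forall₂_unfolds hSs h)
end
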